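/- Define the 3×3 matrices ℓ = [[λ u_x, -v_x, z_x], [3λ², -2λ u_x, λ v_x], [λ² r, -3λ, λ u_x]] and p = -u·ℓ + [[0,0,0],[λ,0,0],[0,1,0]], where r is a smooth function satisfying D_t r + u_x r = 6 with D_t = ∂/∂t + u ∂/∂x. Then the zero-curvature equation ℓ_t - p_x + [ℓ, p] = 0 holds for all λ whenever u, v, z solve u_t = v - u u_x, v_t = z - u v_x, z_t = - u z_x (after differentiating the system in x as needed for the entries u_x, v_x, z_x). -/

import Mathlib

open Real
set_option maxHeartbeats 1600000

noncomputable def pdx (f : ℝ → ℝ → ℝ) (x t : ℝ) : ℝ := deriv (fun y => f y t) x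

noncomputable def pdt (f : ℝ → ℝ → ℝ) (x t : ℝ) : ℝ := deriv (fun s => f x s) t

/-- The material derivative `D_t = ∂/∂t + u ∂/∂x` associated to the velocity `u`. -/
noncomputable def matDt (u f : ℝ → ℝ → ℝ) : ℝ → ℝ → ℝ :=
  fun x t => pdt f x t + u x t * pdx f x t
/-- Entrywise spatial derivative of a matrix-valued function of (x, t). -/
noncomputable def mpdx {n : ℕ} (M : ℝ → ℝ → Matrix (Fin n) (Fin n) ℝ) (x t : ℝ) :
    Matrix (Fin n) (Fin n) ℝ :=
  Matrix.of fun i j => deriv (fun y => M y t i j) x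

/-- Entrywise time derivative of a matrix-valued function of (x, t). -/
noncomputable def mpdt {n : ℕ} (M : ℝ → ℝ → Matrix (Fin n) (Fin n) ℝ) (x t : ℝ) :
    Matrix (Fin n) (Fin n) ℝ :=
  Matrix.of fun i j => deriv (fun s => M x s i j) t

section helpers

lemma lineX (x t : ℝ) : HasDerivAt (fun y : ℝ => (y, t)) ((1 : ℝ), (0 : ℝ)) x :=
  (hasDerivAt_id x).prodMk (hasDerivAt_const x t)

lemma lineT (x t : ℝ) : HasDerivAt (fun s : ℝ => (x, s)) ((0 : ℝ), (1 : ℝ)) t :=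
  (hasDerivAt_const t x).prodMk (hasDerivAt_id t)

variable {E : Type*} [NormedAddCommGroup E] [NormedSpace ℝ E]

lemma sliceX {g : ℝ × ℝ → E} (hg : Differentiable ℝ g) (x t : ℝ) :
    HasDerivAt (fun y => g (y, t)) (fderiv ℝ g (x, t) (1, 0)) x :=
  (hg (x, t)).hasFDerivAt.comp_hasDerivAt x (lineX x t)

lemma sliceT {g : ℝ × ℝ → E} (hg : Differentiable ℝ g) (x t : ℝ) :
    HasDerivAt (fun s => g (x, s)) (fderiv ℝ g (x, t) (0, 1)) t :=
  (hg (x, t)).hasFDerivAt.comp_hasDerivAt t (lineT x t)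

variable {f : ℝ → ℝ → ℝ}

lemma pdx_eq_fderiv (hf : ContDiff ℝ (⊤ : ℕ∞) (Function.uncurry f)) (x t : ℝ) :
    pdx f x t = fderiv ℝ (Function.uncurry f) (x, t) (1, 0) :=
  (sliceX (hf.differentiable (by simp)) x t).deriv

lemma pdt_eq_fderiv (hf : ContDiff ℝ (⊤ : ℕ∞) (Function.uncurry f)) (x t : ℝ) :
    pdt f x t = fderiv ℝ (Function.uncurry f) (x, t) (0, 1) :=
  (sliceT (hf.differentiable (by simp)) x t).deriv

lemma hasDerivAt_pdx (hf : ContDiff ℝ (⊤ : ℕ∞) (Function.uncurry f)) (x t : ℝ) :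
    HasDerivAt (fun y => f y t) (pdx f x t) x := by
  rw [pdx_eq_fderiv hf x t]; exact sliceX (hf.differentiable (by simp)) x t

lemma hasDerivAt_pdt (hf : ContDiff ℝ (⊤ : ℕ∞) (Function.uncurry f)) (x t : ℝ) :
    HasDerivAt (fun s => f x s) (pdt f x t) t := by
  rw [pdt_eq_fderiv hf x t]; exact sliceT (hf.differentiable (by simp)) x t

lemma contDiff_pdx (hf : ContDiff ℝ (⊤ : ℕ∞) (Function.uncurry f)) :
    ContDiff ℝ (⊤ : ℕ∞) (Function.uncurry (pdx f)) := by
  have hF : ContDiff ℝ (⊤ : ℕ∞) (fderiv ℝ (Function.uncurry f)) := hf.fderiv_right (by simp)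
  have he : Function.uncurry (pdx f) =
      fun q : ℝ × ℝ => fderiv ℝ (Function.uncurry f) q (1, 0) := by
    funext q; obtain ⟨x, t⟩ := q; exact pdx_eq_fderiv hf x t
  rw [he]
  exact (ContinuousLinearMap.apply ℝ ℝ ((1, 0) : ℝ × ℝ)).contDiff.comp hF

lemma pdt_pdx_comm (hf : ContDiff ℝ (⊤ : ℕ∞) (Function.uncurry f)) (x t : ℝ) :
    pdt (pdx f) x t = pdx (pdt f) x t := by
  have hF : ContDiff ℝ (⊤ : ℕ∞) (Function.uncurry f) := hf
  have hG : ContDiff ℝ (⊤ : ℕ∞) (fderiv ℝ (Function.uncurry f)) := hF.fderiv_right (by simp)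
  have hGd := hG.differentiable (by simp)
  have hsym := second_derivative_symmetric
    (fun y => (hF.differentiable (by simp) y).hasFDerivAt) (hGd (x, t)).hasFDerivAt
  have h1 : HasDerivAt (fun s => pdx f x s)
      (fderiv ℝ (fderiv ℝ (Function.uncurry f)) (x, t) (0, 1) (1, 0)) t := by
    have h := ((ContinuousLinearMap.apply ℝ ℝ ((1, 0) : ℝ × ℝ)).hasFDerivAt).comp_hasDerivAt t
      (sliceT hGd x t)
    have heq : (fun s => pdx f x s) =
        fun s => fderiv ℝ (Function.uncurry f) (x, s) (1, 0) :=
      funext fun s => pdx_eq_fderiv hf x s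
    rw [heq]; exact h
  have h2 : HasDerivAt (fun y => pdt f y t)
      (fderiv ℝ (fderiv ℝ (Function.uncurry f)) (x, t) (1, 0) (0, 1)) x := by
    have h := ((ContinuousLinearMap.apply ℝ ℝ ((0, 1) : ℝ × ℝ)).hasFDerivAt).comp_hasDerivAt x
      (sliceX hGd x t)
    have heq : (fun y => pdt f y t) =
        fun y => fderiv ℝ (Function.uncurry f) (y, t) (0, 1) :=
      funext fun y => pdt_eq_fderiv hf y t
    rw [heq]; exact h
  rw [pdt, pdx, h1.deriv, h2.deriv]
  exact hsym _ _

end helpers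

theorem statement19
    (u v z r : ℝ → ℝ → ℝ)
    (hu : ContDiff ℝ (⊤ : ℕ∞) (Function.uncurry u))
    (hv : ContDiff ℝ (⊤ : ℕ∞) (Function.uncurry v))
    (hz : ContDiff ℝ (⊤ : ℕ∞) (Function.uncurry z))
    (hrsmooth : ContDiff ℝ (⊤ : ℕ∞) (Function.uncurry r))
    (heq1 : ∀ x t, pdt u x t = v x t - u x t * pdx u x t)
    (heq2 : ∀ x t, pdt v x t = z x t - u x t * pdx v x t)
    (heq3 : ∀ x t, pdt z x t = - u x t * pdx z x t)
    (hr : ∀ x t, matDt u r x t + pdx u x t * r x t = 6)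
    (ℓ p : ℝ → ℝ → ℝ → Matrix (Fin 3) (Fin 3) ℝ)
    (hℓ : ∀ lam x t, ℓ lam x t =
      !![lam * pdx u x t, -pdx v x t, pdx z x t;
         3 * lam ^ 2, -2 * lam * pdx u x t, lam * pdx v x t;
         lam ^ 2 * r x t, -3 * lam, lam * pdx u x t])
    (hp : ∀ lam x t, p lam x t =
      (-(u x t)) • ℓ lam x t + !![0, 0, 0; lam, 0, 0; 0, 1, 0]) :
    ∀ lam x t,
      mpdt (ℓ lam) x t - mpdx (p lam) x t
        + (ℓ lam x t * p lam x t - p lam x t * ℓ lam x t) = 0 := by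
  intro lam x t
  have HUx := hasDerivAt_pdx hu x t
  have HVx := hasDerivAt_pdx hv x t
  have HZx := hasDerivAt_pdx hz x t
  have HRx := hasDerivAt_pdx hrsmooth x t
  have HAx := hasDerivAt_pdx (contDiff_pdx hu) x t
  have HBx := hasDerivAt_pdx (contDiff_pdx hv) x t
  have HCx := hasDerivAt_pdx (contDiff_pdx hz) x t
  have HAt := hasDerivAt_pdt (contDiff_pdx hu) x t
  have HBt := hasDerivAt_pdt (contDiff_pdx hv) x t
  have HCt := hasDerivAt_pdt (contDiff_pdx hz) x t
  have HRt := hasDerivAt_pdt hrsmooth x t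
  -- mixed partial values from the PDE system
  have hAt : pdt (pdx u) x t =
      pdx v x t - (pdx u x t * pdx u x t + u x t * pdx (pdx u) x t) := by
    rw [pdt_pdx_comm hu, pdx]
    have heq : (fun y => pdt u y t) = fun y => v y t - u y t * pdx u y t :=
      funext fun y => heq1 y t
    rw [heq]; exact (HVx.sub (HUx.mul HAx)).deriv
  have hBt : pdt (pdx v) x t =
      pdx z x t - (pdx u x t * pdx v x t + u x t * pdx (pdx v) x t) := by
    rw [pdt_pdx_comm hv, pdx]
    have heq : (fun y => pdt v y t) = fun y => z y t - u y t * pdx v y t :=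
      funext fun y => heq2 y t
    rw [heq]; exact (HZx.sub (HUx.mul HBx)).deriv
  have hCt : pdt (pdx z) x t =
      -pdx u x t * pdx z x t + -u x t * pdx (pdx z) x t := by
    rw [pdt_pdx_comm hz, pdx]
    have heq : (fun y => pdt z y t) = fun y => -u y t * pdx z y t :=
      funext fun y => heq3 y t
    rw [heq]; exact (HUx.neg.mul HCx).deriv
  have hRt : pdt r x t = 6 - u x t * pdx r x t - pdx u x t * r x t := by
    have h := hr x t; simp only [matDt] at h; linarith
  have hAt' : deriv (fun s => pdx u x s) t =
      pdx v x t - (pdx u x t * pdx u x t + u x t * pdx (pdx u) x t) := HAt.deriv.trans hAt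
  have hBt' : deriv (fun s => pdx v x s) t =
      pdx z x t - (pdx u x t * pdx v x t + u x t * pdx (pdx v) x t) := HBt.deriv.trans hBt
  have hCt' : deriv (fun s => pdx z x s) t =
      -pdx u x t * pdx z x t + -u x t * pdx (pdx z) x t := HCt.deriv.trans hCt
  have hRt' : deriv (fun s => r x s) t =
      6 - u x t * pdx r x t - pdx u x t * r x t := HRt.deriv.trans hRt
  have dUU : deriv (fun y => u y t * (lam * pdx u y t)) x =
      pdx u x t * (lam * pdx u x t) + u x t * (lam * pdx (pdx u) x t) :=
    (HUx.mul (HAx.const_mul lam)).deriv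
  have dUV : deriv (fun y => u y t * pdx v y t) x =
      pdx u x t * pdx v x t + u x t * pdx (pdx v) x t := (HUx.mul HBx).deriv
  have dUZ : deriv (fun y => u y t * pdx z y t) x =
      pdx u x t * pdx z x t + u x t * pdx (pdx z) x t := (HUx.mul HCx).deriv
  have dU2 : deriv (fun y => u y t * (2 * lam * pdx u y t)) x =
      pdx u x t * (2 * lam * pdx u x t) + u x t * (2 * lam * pdx (pdx u) x t) :=
    (HUx.mul (HAx.const_mul (2 * lam))).deriv
  have dULV : deriv (fun y => u y t * (lam * pdx v y t)) x =
      pdx u x t * (lam * pdx v x t) + u x t * (lam * pdx (pdx v) x t) :=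
    (HUx.mul (HBx.const_mul lam)).deriv
  have dUR : deriv (fun y => u y t * (lam ^ 2 * r y t)) x =
      pdx u x t * (lam ^ 2 * r x t) + u x t * (lam ^ 2 * pdx r x t) :=
    (HUx.mul (HRx.const_mul (lam ^ 2))).deriv
  ext i j
  fin_cases i <;> fin_cases j <;>
    · simp [mpdt, mpdx, hℓ, hp, Matrix.mul_apply, Fin.sum_univ_three,
        dUU, dUV, dUZ, dU2, dULV, dUR, HUx.deriv, hAt', hBt', hCt', hRt']
      try ring
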